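/- Let α₁ ∈ (1,2] and η₁ > 0. For i = 1,2 let q_i ≥ 0 and let ν_i be a nonnegative Borel measure on (0,∞) with ∫₀^∞ (v ∧ v²) ν_i(dv) < ∞, and define J_i(b) := (1/2) q_i b² + ∫₀^∞ (e^{−bv} − 1 + bv) ν_i(dv); assume neither J_1 nor J_2 is identically zero. Let G_1, G_2 : [0,∞) → [0,∞) be continuous with G_1(x) > 0 and G_2(x) > 0 for x > 0, such that x ↦ G_2(x)/G_1(x) is continuously differentiable on (0,∞) and its derivative does not vanish on some nonempty open interval (x̲, x̄) ⊂ (0,∞). If J_1(b·G_1(x)) + J_2(b·G_2(x)) = η₁ x b^{α₁} for all b ≥ 0 and all x ≥ 0, then there exist constants c₁ > 0 and c₂ > 0 such that J_1(b) = c₁ b^{α₁} and J_2(b) = c₂ b^{α₁} for all b ≥ 0, and c₁ G_1(x)^{α₁} + c₂ G_2(x)^{α₁} = η₁ x for all x ≥ 0. -/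

import Mathlib

/-!
Write `J₁, J₂` for the two exponents and `R = G₂ / G₁`. Substituting `b = u / G₁ x` turns the
equation into `J₁ u + J₂ (R x * u) = a x * u ^ α`; subtracting two instances eliminates `J₁`
and gives `J₂ (s u) - J₂ u = (J₂ s - J₂ 1) u ^ α` for every ratio `s = R x / R y`. As `R' ≠ 0`
somewhere, `R` is not constant, so by the intermediate value theorem these ratios fill an
interval `[1, g]` with `g > 1`. Expanding `J₂ (s t)` in both orders shows
`J₂ s - J₂ 1 = c (s ^ α - 1)` on `[1, g]`, so `u ↦ J₂ u - c u ^ α` is invariant under dilations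
by `[1, g]`, hence constant on `(0, ∞)`; it tends to `0` at `0⁺` because `J₂ u = O(u)` there,
so `J₂ = c u ^ α`, and then `J₁` is read off the substituted equation.
-/

open MeasureTheory Real Set Filter Topology

lemma exp_neg_sub_one_add_le_min {x : ℝ} (hx : 0 ≤ x) : exp (-x) - 1 + x ≤ min x (x ^ 2) := by
  rcases le_total x 1 with hx₁ | hx₁
  · have h := abs_le.1 (abs_exp_sub_one_sub_id_le (x := -x) (by rwa [abs_neg, abs_of_nonneg hx]))
    rw [min_eq_right (by nlinarith)]
    nlinarith [h.2]
  · rw [min_eq_left (by nlinarith)]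
    linarith [exp_le_one_iff.2 (neg_nonpos.2 hx)]

lemma exp_neg_sub_one_add_nonneg (x : ℝ) : 0 ≤ exp (-x) - 1 + x := by
  linarith [add_one_le_exp (-x)]

lemma exp_neg_mul_sub_one_add_le {u v : ℝ} (hu₀ : 0 ≤ u) (hu₁ : u ≤ 1) (hv : 0 ≤ v) :
    exp (-(u * v)) - 1 + u * v ≤ u * min v (v ^ 2) := by
  refine (exp_neg_sub_one_add_le_min (mul_nonneg hu₀ hv)).trans ?_
  rw [mul_min_of_nonneg _ _ hu₀]
  exact min_le_min le_rfl
    (by nlinarith [mul_nonneg (mul_nonneg hu₀ (sq_nonneg v)) (sub_nonneg.2 hu₁)])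

noncomputable def laplaceExponent (q : ℝ) (ν : Measure ℝ) (b : ℝ) : ℝ :=
  q / 2 * b ^ 2 + ∫ v in Ioi 0, (exp (-(b * v)) - 1 + b * v) ∂ν

section LaplaceExponent

variable {q : ℝ} {ν : Measure ℝ}

lemma laplaceExponent_zero : laplaceExponent q ν 0 = 0 := by
  simp [laplaceExponent]

lemma laplaceExponent_nonneg (hq : 0 ≤ q) (b : ℝ) : 0 ≤ laplaceExponent q ν b :=
  add_nonneg (by positivity) <| integral_nonneg fun v => exp_neg_sub_one_add_nonneg (b * v)

lemma integrable_min_sq_of_lintegral_lt_top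
    (hν : ∫⁻ v in Ioi 0, ENNReal.ofReal (min v (v ^ 2)) ∂ν < ⊤) :
    Integrable (fun v => min v (v ^ 2)) (ν.restrict (Ioi 0)) := by
  have hnn : 0 ≤ᵐ[ν.restrict (Ioi 0)] fun v => min v (v ^ 2) :=
    (ae_restrict_iff' measurableSet_Ioi).2 <| ae_of_all _ fun v hv =>
      le_min (le_of_lt hv) (sq_nonneg v)
  exact ⟨(continuous_id.min (continuous_pow 2)).aestronglyMeasurable,
    (hasFiniteIntegral_iff_ofReal hnn).2 hν⟩

lemma laplaceExponent_le_mul (hq : 0 ≤ q)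
    (hν : ∫⁻ v in Ioi 0, ENNReal.ofReal (min v (v ^ 2)) ∂ν < ⊤)
    {u : ℝ} (hu₀ : 0 ≤ u) (hu₁ : u ≤ 1) :
    laplaceExponent q ν u ≤ (q / 2 + ∫ v in Ioi 0, min v (v ^ 2) ∂ν) * u := by
  have hint : ∫ v in Ioi 0, (exp (-(u * v)) - 1 + u * v) ∂ν ≤
      ∫ v in Ioi 0, u * min v (v ^ 2) ∂ν :=
    integral_mono_of_nonneg (ae_of_all _ fun v => exp_neg_sub_one_add_nonneg (u * v))
      ((integrable_min_sq_of_lintegral_lt_top hν).const_mul u)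
      ((ae_restrict_iff' measurableSet_Ioi).2 <| ae_of_all _ fun v hv =>
        exp_neg_mul_sub_one_add_le hu₀ hu₁ (le_of_lt hv))
  rw [integral_const_mul] at hint
  have hquad : q / 2 * u ^ 2 ≤ q / 2 * u := by
    gcongr
    nlinarith
  unfold laplaceExponent
  linarith

lemma tendsto_laplaceExponent_nhdsGT_zero (hq : 0 ≤ q)
    (hν : ∫⁻ v in Ioi 0, ENNReal.ofReal (min v (v ^ 2)) ∂ν < ⊤) :
    Tendsto (laplaceExponent q ν) (𝓝[>] 0) (𝓝 0) := by
  have hlin :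
      Tendsto (fun u => (q / 2 + ∫ v in Ioi 0, min v (v ^ 2) ∂ν) * u) (𝓝[>] 0) (𝓝 0) :=
    tendsto_nhdsWithin_of_tendsto_nhds ((continuous_const_mul _).tendsto' 0 0 (mul_zero _))
  refine tendsto_of_tendsto_of_tendsto_of_le_of_le' tendsto_const_nhds hlin
    (Eventually.of_forall fun u => laplaceExponent_nonneg hq u) ?_
  filter_upwards [Ioo_mem_nhdsGT zero_lt_one] with u hu
  exact laplaceExponent_le_mul hq hν hu.1.le hu.2.le

end LaplaceExponent

section Scaling

variable {f φ : ℝ → ℝ} {α g : ℝ}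

lemma eq_apply_one_of_scaling_Icc (hg : 1 < g) (hφ : ∀ s ∈ Icc 1 g, ∀ u ≥ 0, φ (s * u) = φ u)
    {u : ℝ} (hu : 0 < u) : φ u = φ 1 := by
  have hpow : ∀ n : ℕ, ∀ t ∈ Icc 1 (g ^ n), ∀ u ≥ 0, φ (t * u) = φ u := by
    intro n
    induction n with
    | zero =>
      rintro t ⟨ht₁, ht⟩ u -
      rw [le_antisymm (by simpa using ht) ht₁, one_mul]
    | succ n ih =>
      rintro t ⟨ht₁, ht⟩ u hu
      rcases le_or_gt t g with htg | htg
      · exact hφ t ⟨ht₁, htg⟩ u hu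
      have hg₀ : 0 < g := zero_lt_one.trans hg
      have htg' : t / g ∈ Icc 1 (g ^ n) :=
        ⟨(one_le_div hg₀).2 htg.le, (div_le_iff₀ hg₀).2 (by rwa [← pow_succ])⟩
      calc φ (t * u) = φ (g * (t / g * u)) := by field_simp
        _ = φ (t / g * u) := hφ g ⟨hg.le, le_rfl⟩ _ (mul_nonneg (by linarith [htg'.1]) hu)
        _ = φ u := ih _ htg' u hu
  have hall : ∀ t ≥ 1, ∀ u ≥ 0, φ (t * u) = φ u := fun t ht u hu =>
    let ⟨n, hn⟩ := pow_unbounded_of_one_lt t hg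
    hpow n t ⟨ht, hn.le⟩ u hu
  rcases le_total 1 u with hu₁ | hu₁
  · simpa using hall u hu₁ 1 zero_le_one
  · simpa [hu.ne'] using (hall u⁻¹ (one_le_inv₀ hu |>.2 hu₁) u hu.le).symm

lemma exists_sub_eq_mul_rpow_sub_one (hg : 1 < g) (hα : 0 < α)
    (hf : ∀ s ∈ Icc 1 g, ∀ u ≥ 0, f (s * u) = f u + (f s - f 1) * u ^ α) :
    ∃ c, ∀ s ∈ Icc 1 g, f s - f 1 = c * (s ^ α - 1) := by
  have hgα : 1 < g ^ α := one_lt_rpow hg hα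
  refine ⟨(f g - f 1) / (g ^ α - 1), fun s hs => ?_⟩
  have h₁ := hf s hs g (by linarith)
  have h₂ := hf g ⟨hg.le, le_rfl⟩ s (by linarith [hs.1])
  rw [mul_comm g s] at h₂
  field_simp [(sub_pos.2 hgα).ne']
  linear_combination h₂ - h₁

lemma exists_eq_mul_rpow_of_scaling_Icc (hg : 1 < g) (hα : 0 < α)
    (hf : ∀ s ∈ Icc 1 g, ∀ u ≥ 0, f (s * u) = f u + (f s - f 1) * u ^ α)
    (hf₀ : f 0 = 0) (hlim : Tendsto f (𝓝[>] 0) (𝓝 0)) :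
    ∃ c, ∀ u ≥ 0, f u = c * u ^ α := by
  obtain ⟨c, hc⟩ := exists_sub_eq_mul_rpow_sub_one hg hα hf
  set φ : ℝ → ℝ := fun u => f u - c * u ^ α
  have hφ : ∀ s ∈ Icc 1 g, ∀ u ≥ 0, φ (s * u) = φ u := fun s hs u hu => by
    simp only [φ, mul_rpow (zero_le_one.trans hs.1) hu, hf s hs u hu, hc s hs]
    ring
  have hφlim : Tendsto φ (𝓝[>] 0) (𝓝 0) := by
    have hpow : Tendsto (fun u : ℝ => c * u ^ α) (𝓝[>] 0) (𝓝 0) := by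
      simpa [zero_rpow hα.ne'] using tendsto_nhdsWithin_of_tendsto_nhds
        ((continuousAt_rpow_const 0 α (Or.inr hα.le)).tendsto.const_mul c)
    simpa using hlim.sub hpow
  have hφ₁ : φ 1 = 0 := by
    refine tendsto_nhds_unique (tendsto_const_nhds.congr' ?_) hφlim
    filter_upwards [self_mem_nhdsWithin] with u hu
    exact (eq_apply_one_of_scaling_Icc hg hφ hu).symm
  refine ⟨c, fun u hu => ?_⟩
  rcases hu.eq_or_lt with rfl | hu
  · simp [hf₀, zero_rpow hα.ne']
  · linear_combination (eq_apply_one_of_scaling_Icc hg hφ hu).trans hφ₁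

end Scaling

section FunctionalEquation

variable {F f : ℝ → ℝ} {α : ℝ}

lemma apply_div_mul_eq_add_mul_rpow {r₁ r₂ a₁ a₂ : ℝ} (hr₂ : 0 < r₂)
    (h₁ : ∀ u ≥ 0, F u + f (r₁ * u) = a₁ * u ^ α) (h₂ : ∀ u ≥ 0, F u + f (r₂ * u) = a₂ * u ^ α)
    {u : ℝ} (hu : 0 ≤ u) : f (r₁ / r₂ * u) = f u + (f (r₁ / r₂) - f 1) * u ^ α := by
  have hdiff : ∀ u ≥ 0, f (r₁ / r₂ * u) - f u = (a₁ - a₂) / r₂ ^ α * u ^ α := fun u hu => by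
    have e₁ := h₁ (u / r₂) (by positivity)
    have e₂ := h₂ (u / r₂) (by positivity)
    rw [show r₁ * (u / r₂) = r₁ / r₂ * u by ring, div_rpow hu hr₂.le] at e₁
    rw [mul_div_cancel₀ u hr₂.ne', div_rpow hu hr₂.le] at e₂
    linear_combination e₁ - e₂
  have hdiff₁ := hdiff 1 zero_le_one
  rw [mul_one, one_rpow, mul_one] at hdiff₁
  linear_combination hdiff u hu - hdiff₁ * u ^ α

lemma exists_lt_of_deriv_ne_zero {R : ℝ → ℝ} {s : Set ℝ} (hs : IsOpen s) {x₀ : ℝ} (hx₀ : x₀ ∈ s)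
    (hd : deriv R x₀ ≠ 0) : ∃ p ∈ s, ∃ p' ∈ s, R p < R p' := by
  by_contra! h
  refine hd ?_
  have hconst : R =ᶠ[𝓝 x₀] fun _ => R x₀ := by
    filter_upwards [hs.mem_nhds hx₀] with x hx
    exact le_antisymm (h x₀ hx₀ x hx) (h x hx x₀ hx₀)
  rw [hconst.deriv_eq, deriv_const]

lemma exists_scaling_Icc {R a : ℝ → ℝ} {s : Set ℝ} (hs : IsOpen s) (hsc : IsPreconnected s)
    (hR : ContinuousOn R s) (hRpos : ∀ x ∈ s, 0 < R x) {x₀ : ℝ} (hx₀ : x₀ ∈ s)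
    (hd : deriv R x₀ ≠ 0) (hFf : ∀ x ∈ s, ∀ u ≥ 0, F u + f (R x * u) = a x * u ^ α) :
    ∃ g > 1, ∀ t ∈ Icc 1 g, ∀ u ≥ 0, f (t * u) = f u + (f t - f 1) * u ^ α := by
  obtain ⟨p, hp, p', hp', hlt⟩ := exists_lt_of_deriv_ne_zero hs hx₀ hd
  have hRp := hRpos p hp
  refine ⟨R p' / R p, (one_lt_div hRp).2 hlt, fun t ht u hu => ?_⟩
  have htR : t * R p ∈ Icc (R p) (R p') :=
    ⟨le_mul_of_one_le_left hRp.le ht.1, (le_div_iff₀ hRp).1 ht.2⟩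
  obtain ⟨x, hx, hxt⟩ := hsc.intermediate_value hp hp' hR htR
  have hdiv : R x / R p = t := by rw [hxt, mul_div_cancel_right₀ t hRp.ne']
  simpa [hdiv] using apply_div_mul_eq_add_mul_rpow hRp (hFf x hx) (hFf p hp) hu

lemma add_apply_div_mul_eq {G₁ G₂ : ℝ → ℝ} {k x : ℝ} (hG₁ : 0 < G₁ x)
    (h : ∀ b ≥ 0, F (b * G₁ x) + f (b * G₂ x) = k * b ^ α) {u : ℝ} (hu : 0 ≤ u) :
    F u + f (G₂ x / G₁ x * u) = k / G₁ x ^ α * u ^ α := by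
  have e := h (u / G₁ x) (by positivity)
  rw [div_mul_cancel₀ u hG₁.ne', show u / G₁ x * G₂ x = G₂ x / G₁ x * u by ring,
    div_rpow hu hG₁.le] at e
  rw [e]
  ring

lemma pos_of_eq_mul_rpow {c : ℝ} (hf : ∀ b ≥ 0, f b = c * b ^ α) (hnn : ∀ b, 0 ≤ f b)
    (hne : ∃ b > 0, f b ≠ 0) : 0 < c := by
  obtain ⟨b, hb, hfb⟩ := hne
  rw [hf b hb.le] at hfb
  have hfb₀ := hf b hb.le ▸ hnn b
  exact (nonneg_of_mul_nonneg_left hfb₀ (rpow_pos_of_pos hb α)).lt_of_ne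
    (left_ne_zero_of_mul hfb).symm

end FunctionalEquation

theorem stmt_14_general (α₁ η₁ : ℝ) (hα₁ : α₁ ∈ Set.Ioc (1:ℝ) 2)
    (q : Fin 2 → ℝ) (hq : ∀ i, 0 ≤ q i)
    (ν : Fin 2 → Measure ℝ)
    (hν : ∀ i, ∫⁻ v in Set.Ioi (0:ℝ), ENNReal.ofReal (min v (v^2)) ∂(ν i) < ⊤)
    (J : Fin 2 → ℝ → ℝ)
    (hJ : ∀ i b, J i b =
      q i / 2 * b^2 + ∫ v in Set.Ioi (0:ℝ), (Real.exp (-(b*v)) - 1 + b*v) ∂(ν i))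
    (hJne : ∀ i, ∃ b > (0:ℝ), J i b ≠ 0)
    (G₁ G₂ : ℝ → ℝ)
    (hG₁nn : ∀ x ≥ (0:ℝ), 0 ≤ G₁ x) (hG₂nn : ∀ x ≥ (0:ℝ), 0 ≤ G₂ x)
    (hG₁ : ∀ x > (0:ℝ), 0 < G₁ x) (hG₂ : ∀ x > (0:ℝ), 0 < G₂ x)
    (hratio : ContDiffOn ℝ 1 (fun x => G₂ x / G₁ x) (Set.Ioi 0))
    (x₁ x₂ : ℝ) (hx₁ : 0 < x₁) (hx₁₂ : x₁ < x₂)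
    (hder : ∀ x ∈ Set.Ioo x₁ x₂, deriv (fun y => G₂ y / G₁ y) x ≠ 0)
    (hEq : ∀ b ≥ (0:ℝ), ∀ x ≥ (0:ℝ), J 0 (b * G₁ x) + J 1 (b * G₂ x) = η₁ * x * b ^ α₁) :
    ∃ c₁ > (0:ℝ), ∃ c₂ > (0:ℝ),
      (∀ b ≥ (0:ℝ), J 0 b = c₁ * b ^ α₁ ∧ J 1 b = c₂ * b ^ α₁) ∧
      ∀ x ≥ (0:ℝ), c₁ * G₁ x ^ α₁ + c₂ * G₂ x ^ α₁ = η₁ * x := by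
  obtain rfl : J = fun i => laplaceExponent (q i) (ν i) := funext fun i => funext (hJ i)
  have hα : 0 < α₁ := zero_lt_one.trans hα₁.1
  have hscaled : ∀ x > 0, ∀ u ≥ 0, laplaceExponent (q 0) (ν 0) u +
      laplaceExponent (q 1) (ν 1) (G₂ x / G₁ x * u) = η₁ * x / G₁ x ^ α₁ * u ^ α₁ :=
    fun x hx _ => add_apply_div_mul_eq (hG₁ x hx) fun b hb => hEq b hb x hx.le
  have hIoo : Ioo x₁ x₂ ⊆ Ioi 0 := fun x hx => hx₁.trans hx.1
  obtain ⟨x₀, hx₀⟩ := nonempty_Ioo.2 hx₁₂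
  obtain ⟨g, hg, hscaling⟩ := exists_scaling_Icc isOpen_Ioo isPreconnected_Ioo
    (hratio.continuousOn.mono hIoo) (fun x hx => div_pos (hG₂ x (hIoo hx)) (hG₁ x (hIoo hx)))
    hx₀ (hder x₀ hx₀) fun x hx => hscaled x (hIoo hx)
  obtain ⟨c₂, hc₂⟩ := exists_eq_mul_rpow_of_scaling_Icc hg hα hscaling laplaceExponent_zero
    (tendsto_laplaceExponent_nhdsGT_zero (hq 1) (hν 1))
  set c₁ := η₁ * x₁ / G₁ x₁ ^ α₁ - c₂ * (G₂ x₁ / G₁ x₁) ^ α₁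
  have hc₁ : ∀ b ≥ 0, laplaceExponent (q 0) (ν 0) b = c₁ * b ^ α₁ := fun b hb => by
    have h := hscaled x₁ hx₁ b hb
    have hR : 0 ≤ G₂ x₁ / G₁ x₁ := (div_pos (hG₂ x₁ hx₁) (hG₁ x₁ hx₁)).le
    rw [hc₂ _ (mul_nonneg hR hb), mul_rpow hR hb] at h
    linear_combination h
  refine ⟨c₁, pos_of_eq_mul_rpow hc₁ (laplaceExponent_nonneg (hq 0)) (hJne 0),
    c₂, pos_of_eq_mul_rpow hc₂ (laplaceExponent_nonneg (hq 1)) (hJne 1),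
    fun b hb => ⟨hc₁ b hb, hc₂ b hb⟩, fun x hx => ?_⟩
  simpa [hc₁ _ (hG₁nn x hx), hc₂ _ (hG₂nn x hx)] using hEq 1 zero_le_one x hx

/-- two-dimensional classification, case I(b): if the ratio G₂/G₁ has
nonvanishing derivative on some subinterval and J₁(bG₁(x)) + J₂(bG₂(x)) = η₁ x b^{α₁},
then both Laplace exponents are α₁-stable, J_i(b) = c_i b^{α₁}, and
c₁ G₁(x)^{α₁} + c₂ G₂(x)^{α₁} = η₁ x. -/
theorem stmt_14 (α₁ η₁ : ℝ) (hα₁ : α₁ ∈ Set.Ioc (1:ℝ) 2) (hη₁ : 0 < η₁)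
    (q : Fin 2 → ℝ) (hq : ∀ i, 0 ≤ q i)
    (ν : Fin 2 → Measure ℝ)
    (hν : ∀ i, ∫⁻ v in Set.Ioi (0:ℝ), ENNReal.ofReal (min v (v^2)) ∂(ν i) < ⊤)
    (J : Fin 2 → ℝ → ℝ)
    (hJ : ∀ i b, J i b =
      q i / 2 * b^2 + ∫ v in Set.Ioi (0:ℝ), (Real.exp (-(b*v)) - 1 + b*v) ∂(ν i))
    (hJne : ∀ i, ∃ b > (0:ℝ), J i b ≠ 0)
    (G₁ G₂ : ℝ → ℝ)
    (hG₁c : ContinuousOn G₁ (Set.Ici 0)) (hG₂c : ContinuousOn G₂ (Set.Ici 0))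
    (hG₁nn : ∀ x ≥ (0:ℝ), 0 ≤ G₁ x) (hG₂nn : ∀ x ≥ (0:ℝ), 0 ≤ G₂ x)
    (hG₁ : ∀ x > (0:ℝ), 0 < G₁ x) (hG₂ : ∀ x > (0:ℝ), 0 < G₂ x)
    (hratio : ContDiffOn ℝ 1 (fun x => G₂ x / G₁ x) (Set.Ioi 0))
    (x₁ x₂ : ℝ) (hx₁ : 0 < x₁) (hx₁₂ : x₁ < x₂)
    (hder : ∀ x ∈ Set.Ioo x₁ x₂, deriv (fun y => G₂ y / G₁ y) x ≠ 0)
    (hEq : ∀ b ≥ (0:ℝ), ∀ x ≥ (0:ℝ), J 0 (b * G₁ x) + J 1 (b * G₂ x) = η₁ * x * b ^ α₁) :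
    ∃ c₁ > (0:ℝ), ∃ c₂ > (0:ℝ),
      (∀ b ≥ (0:ℝ), J 0 b = c₁ * b ^ α₁ ∧ J 1 b = c₂ * b ^ α₁) ∧
      ∀ x ≥ (0:ℝ), c₁ * G₁ x ^ α₁ + c₂ * G₂ x ^ α₁ = η₁ * x :=
  stmt_14_general α₁ η₁ hα₁ q hq ν hν J hJ hJne G₁ G₂ hG₁nn hG₂nn hG₁ hG₂ hratio x₁ x₂ hx₁ hx₁₂ hder
    hEq
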